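/- arXiv:1309.5232 — 2 statements merged into one kernel-verified Lean document; each statement's English description precedes it below -/
import Mathlib

section
/- Let σ : ℝ → ℝ be bounded, continuously differentiable with bounded Lipschitz derivative, and let φ(x,v) be the flow of the ODE dy/dx = σ(y), φ(0,v) = v. Then the partial derivative of φ with respect to the initial value v satisfies ∂_v φ(x,v) = exp(∫₀ˣ σ'(φ(y,v)) dy). -/
open Real Set Filter Asymptotics NNReal

/-!
The candidate derivative `J x = exp (∫₀ˣ σ'(φ(y,v)) dy)` solves the variational equation
`J' = σ'(φ(·,v)) J`, `J 0 = 1`. For `x ≥ 0` the remainder `R = φ(·,w) - φ(·,v) - (w - v) J`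
satisfies `R' = σ'(φ(·,v)) R + T`, where `T` is the first-order Taylor error of `σ` between
`φ(·,v)` and `φ(·,w)`. Since `σ'` is Lipschitz and the flow is Lipschitz in the initial value
(Grönwall), `T = O(|w - v|²)`, and Grönwall again gives `R x = O(|w - v|²)`. Negative times
follow by reversing time, which replaces `σ` by `-σ`.
-/

lemma gronwallBound_zero_mul (K ε c x : ℝ) :
    gronwallBound 0 K (ε * c) x = gronwallBound 0 K ε x * c := by
  unfold gronwallBound
  split_ifs <;> ring

lemma hasDerivAt_of_norm_sub_sub_le {𝕜 F : Type*} [NontriviallyNormedField 𝕜]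
    [NormedAddCommGroup F] [NormedSpace 𝕜 F] {f : 𝕜 → F} {a : F} {v : 𝕜} (C : ℝ)
    (h : ∀ w, ‖f w - f v - (w - v) • a‖ ≤ C * ‖w - v‖ ^ 2) : HasDerivAt f a v := by
  rw [hasDerivAt_iff_isLittleO]
  refine IsBigO.trans_isLittleO ?_ (isLittleO_pow_sub_sub v one_lt_two)
  exact IsBigO.of_bound C (Eventually.of_forall fun w => by simpa using h w)

lemma abs_sub_sub_mul_le_of_lipschitzWith {f f' : ℝ → ℝ} {K : ℝ≥0}
    (hf : ∀ y, HasDerivAt f (f' y) y) (hf' : LipschitzWith K f') (a b : ℝ) :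
    |f b - f a - f' a * (b - a)| ≤ K * |b - a| ^ 2 := by
  have hderiv : ∀ y ∈ uIcc a b,
      HasDerivWithinAt (fun z => f z - f' a * z) (f' y - f' a) (uIcc a b) y := fun y _ =>
    ((hf y).sub (((hasDerivAt_id y).const_mul (f' a)).congr_deriv (mul_one _))).hasDerivWithinAt
  have hbound : ∀ y ∈ uIcc a b, ‖f' y - f' a‖ ≤ K * |b - a| := fun y hy =>
    calc ‖f' y - f' a‖ ≤ K * |y - a| := by simpa [Real.dist_eq] using hf'.dist_le_mul y a
      _ ≤ K * |b - a| := mul_le_mul_of_nonneg_left (abs_sub_left_of_mem_uIcc hy) K.coe_nonneg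
  calc |f b - f a - f' a * (b - a)| = ‖(f b - f' a * b) - (f a - f' a * a)‖ := by
        rw [Real.norm_eq_abs]; ring_nf
    _ ≤ K * |b - a| * ‖b - a‖ := (convex_uIcc a b).norm_image_sub_le_of_norm_hasDerivWithin_le
        hderiv hbound left_mem_uIcc right_mem_uIcc
    _ = K * |b - a| ^ 2 := by rw [Real.norm_eq_abs]; ring

section Flow

variable {σ σ' : ℝ → ℝ} {L K : ℝ≥0} {φ : ℝ → ℝ → ℝ}

lemma abs_flow_sub_le (hσ : LipschitzWith L σ) (hφ0 : ∀ v, φ 0 v = v)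
    (hφ : ∀ v x, HasDerivAt (fun x' => φ x' v) (σ (φ x v)) x) (v w : ℝ) {t : ℝ} (ht : 0 ≤ t) :
    |φ t w - φ t v| ≤ |w - v| * exp (L * t) := by
  have hcont : ∀ u, ContinuousOn (fun t => φ t u) (Icc 0 t) := fun u s _ =>
    (hφ u s).continuousAt.continuousWithinAt
  simpa [Real.dist_eq] using dist_le_of_trajectories_ODE (v := fun _ => σ) (fun _ => hσ)
    (hcont w) (fun s _ => (hφ w s).hasDerivWithinAt) (hcont v)
    (fun s _ => (hφ v s).hasDerivWithinAt) (by simp [hφ0, Real.dist_eq]) t ⟨ht, le_rfl⟩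

lemma abs_flow_sub_sub_mul_exp_integral_le (hσ : ∀ y, HasDerivAt σ (σ' y) y)
    (hσL : LipschitzWith L σ) (hσ'K : LipschitzWith K σ') (hφ0 : ∀ v, φ 0 v = v)
    (hφ : ∀ v x, HasDerivAt (fun x' => φ x' v) (σ (φ x v)) x) (v w : ℝ) {x : ℝ} (hx : 0 ≤ x) :
    |φ x w - φ x v - (w - v) * exp (∫ y in (0:ℝ)..x, σ' (φ y v))| ≤
      gronwallBound 0 L (K * exp (L * x) ^ 2) x * |w - v| ^ 2 := by
  set J : ℝ → ℝ := fun t => exp (∫ y in (0:ℝ)..t, σ' (φ y v))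
  have hcont : Continuous fun y => σ' (φ y v) :=
    hσ'K.continuous.comp (continuous_iff_continuousAt.2 fun t => (hφ v t).continuousAt)
  have hJ : ∀ t, HasDerivAt J (σ' (φ t v) * J t) t := fun t =>
    ((hcont.integral_hasStrictDerivAt 0 t).hasDerivAt.exp).congr_deriv (mul_comm _ _)
  set R : ℝ → ℝ := fun t => φ t w - φ t v - (w - v) * J t
  have hR : ∀ t, HasDerivAt R (σ (φ t w) - σ (φ t v) - (w - v) * (σ' (φ t v) * J t)) t :=
    fun t => ((hφ w t).sub (hφ v t)).sub ((hJ t).const_mul (w - v))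
  have hbound : ∀ t ∈ Ico 0 x, ‖σ (φ t w) - σ (φ t v) - (w - v) * (σ' (φ t v) * J t)‖ ≤
      L * ‖R t‖ + K * exp (L * x) ^ 2 * |w - v| ^ 2 := by
    intro t ht
    have hsplit : σ (φ t w) - σ (φ t v) - (w - v) * (σ' (φ t v) * J t) =
        (σ (φ t w) - σ (φ t v) - σ' (φ t v) * (φ t w - φ t v)) + σ' (φ t v) * R t := by ring
    have htaylor : |σ (φ t w) - σ (φ t v) - σ' (φ t v) * (φ t w - φ t v)| ≤
        K * exp (L * x) ^ 2 * |w - v| ^ 2 :=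
      calc _ ≤ K * |φ t w - φ t v| ^ 2 := abs_sub_sub_mul_le_of_lipschitzWith hσ hσ'K _ _
        _ ≤ K * (|w - v| * exp (L * x)) ^ 2 := by
          gcongr
          exact (abs_flow_sub_le hσL hφ0 hφ v w ht.1).trans (by gcongr; exact ht.2.le)
        _ = _ := by ring
    have hσ'L : |σ' (φ t v)| ≤ L := by
      simpa [(hσ _).deriv] using norm_deriv_le_of_lipschitz (x₀ := φ t v) hσL
    calc ‖σ (φ t w) - σ (φ t v) - (w - v) * (σ' (φ t v) * J t)‖
        = |(σ (φ t w) - σ (φ t v) - σ' (φ t v) * (φ t w - φ t v)) + σ' (φ t v) * R t| := by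
          rw [hsplit, Real.norm_eq_abs]
      _ ≤ |σ (φ t w) - σ (φ t v) - σ' (φ t v) * (φ t w - φ t v)| + |σ' (φ t v)| * |R t| :=
          (abs_add_le _ _).trans_eq (by rw [abs_mul])
      _ ≤ K * exp (L * x) ^ 2 * |w - v| ^ 2 + L * |R t| :=
          add_le_add htaylor (mul_le_mul_of_nonneg_right hσ'L (abs_nonneg _))
      _ = L * ‖R t‖ + K * exp (L * x) ^ 2 * |w - v| ^ 2 := by rw [Real.norm_eq_abs]; ring
  have := norm_le_gronwallBound_of_norm_deriv_right_le (δ := 0)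
    (fun t _ => (hR t).continuousAt.continuousWithinAt) (fun t _ => (hR t).hasDerivWithinAt)
    (by simp [R, J, hφ0]) hbound x ⟨hx, le_rfl⟩
  rwa [sub_zero, gronwallBound_zero_mul, Real.norm_eq_abs] at this

lemma hasDerivAt_flow_of_nonneg (hσ : ∀ y, HasDerivAt σ (σ' y) y) (hσL : LipschitzWith L σ)
    (hσ'K : LipschitzWith K σ') (hφ0 : ∀ v, φ 0 v = v)
    (hφ : ∀ v x, HasDerivAt (fun x' => φ x' v) (σ (φ x v)) x) {x : ℝ} (hx : 0 ≤ x) (v : ℝ) :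
    HasDerivAt (fun w => φ x w) (exp (∫ y in (0:ℝ)..x, σ' (φ y v))) v :=
  hasDerivAt_of_norm_sub_sub_le _ fun w => by
    simpa using abs_flow_sub_sub_mul_exp_integral_le hσ hσL hσ'K hφ0 hφ v w hx

lemma hasDerivAt_flow (hσ : ∀ y, HasDerivAt σ (σ' y) y) (hσL : LipschitzWith L σ)
    (hσ'K : LipschitzWith K σ') (hφ0 : ∀ v, φ 0 v = v)
    (hφ : ∀ v x, HasDerivAt (fun x' => φ x' v) (σ (φ x v)) x) (x v : ℝ) :
    HasDerivAt (fun w => φ x w) (exp (∫ y in (0:ℝ)..x, σ' (φ y v))) v := by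
  rcases le_total 0 x with hx | hx
  · exact hasDerivAt_flow_of_nonneg hσ hσL hσ'K hφ0 hφ hx v
  · have hrev := hasDerivAt_flow_of_nonneg (σ := fun y => -σ y) (σ' := fun y => -σ' y)
      (φ := fun t w => φ (-t) w) (fun y => (hσ y).neg) hσL.neg hσ'K.neg (by simpa using hφ0)
      (fun w t => by simpa [Function.comp_def] using (hφ w (-t)).comp t (hasDerivAt_neg t))
      (neg_nonneg.2 hx) v
    have hint : ∫ y in (0:ℝ)..-x, -σ' (φ (-y) v) = ∫ y in (0:ℝ)..x, σ' (φ y v) := by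
      rw [intervalIntegral.integral_neg, intervalIntegral.integral_comp_neg (fun y => σ' (φ y v)),
        intervalIntegral.integral_symm, neg_neg, neg_zero, neg_neg]
    simpa [hint] using hrev

end Flow

theorem stmt_1_general (σ : ℝ → ℝ) (M' : ℝ) (K : NNReal)
    (hC1 : ContDiff ℝ 1 σ)
    (hdbdd : ∀ x, |deriv σ x| ≤ M')
    (hdlip : LipschitzWith K (deriv σ))
    (φ : ℝ → ℝ → ℝ)
    (hφ0 : ∀ v : ℝ, φ 0 v = v)
    (hφ : ∀ v x : ℝ, HasDerivAt (fun x' => φ x' v) (σ (φ x v)) x) :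
    ∀ x v : ℝ, HasDerivAt (fun v' => φ x v')
      (Real.exp (∫ y in (0:ℝ)..x, deriv σ (φ y v))) v := by
  have hσ : Differentiable ℝ σ := hC1.differentiable one_ne_zero
  have hσL : LipschitzWith M'.toNNReal σ := lipschitzWith_of_nnnorm_deriv_le hσ fun y => by
    rw [← NNReal.coe_le_coe, coe_nnnorm, Real.coe_toNNReal']
    exact (hdbdd y).trans (le_max_left _ _)
  exact hasDerivAt_flow (fun y => (hσ y).hasDerivAt) hσL hdlip hφ0 hφ

/-- For σ ∈ C¹_{b,lip}(ℝ) and φ the flow of `dy/dx = σ(y)`, `φ(0,v) = v`,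
the derivative of the flow in the initial value satisfies
`∂_v φ(x,v) = exp(∫₀ˣ σ'(φ(y,v)) dy)`. -/
theorem stmt_1 (σ : ℝ → ℝ) (M M' : ℝ) (K : NNReal)
    (hbdd : ∀ x, |σ x| ≤ M)
    (hC1 : ContDiff ℝ 1 σ)
    (hdbdd : ∀ x, |deriv σ x| ≤ M')
    (hdlip : LipschitzWith K (deriv σ))
    (φ : ℝ → ℝ → ℝ)
    (hφ0 : ∀ v : ℝ, φ 0 v = v)
    (hφ : ∀ v x : ℝ, HasDerivAt (fun x' => φ x' v) (σ (φ x v)) x) :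
    ∀ x v : ℝ, HasDerivAt (fun v' => φ x v')
      (Real.exp (∫ y in (0:ℝ)..x, deriv σ (φ y v))) v :=
  stmt_1_general σ M' K hC1 hdbdd hdlip φ hφ0 hφ
end

section
/- (Comparison lemma for ODEs.) Let f, f̃ : ℝ² → ℝ satisfy Carathéodory conditions: measurable in t, continuous in x, and |f(t,x)|, |f̃(t,x)| ≤ m(t) with m locally integrable. Let (t₀, x₀) and (t₀, x̃₀) with x₀ ≤ x̃₀. Suppose x_t solves dx = f(t,x)dt, x_{t₀} = x₀, and x̃_t is the maximal solution of dx̃ = f̃(t,x̃)dt, x̃_{t₀} = x̃₀. If (t − t₀) f(t,x) ≤ (t − t₀) f̃(t,x) for a.e. (t,x) ∈ ℝ², then x_t ≤ x̃_t for every t in the common interval of existence. -/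
open Set MeasureTheory intervalIntegral

/-!
Truncated at the solution `x`, the right-hand side `g t y = f̃ t (max y (x t))` is again a
Carathéodory function, so Peano's theorem in Carathéodory form (Tonelli's delayed approximations
and Arzelà–Ascoli) gives a solution `Z` of `Z' = g(t, Z)`, `Z t₀ = x̃₀`. On an interval where
`Z < x`, `Z` moves with velocity `f̃(t, x)`, which is `≥ f(t, x)` after `t₀` and `≤ f(t, x)`
before `t₀`; hence `Z - x`, nonnegative at `t₀`, cannot become negative on either side. So
`max Z x = Z`, `Z` solves the equation of `x̃`, and maximality gives `x ≤ Z ≤ x̃`.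
-/

open Filter Topology

namespace Caratheodory

structure IsCaratheodory (g : ℝ → ℝ → ℝ) (m : ℝ → ℝ) : Prop where
  measurable_left : ∀ y, Measurable (g · y)
  continuous_right : ∀ t, Continuous (g t)
  locallyIntegrable_bound : LocallyIntegrable m
  abs_le_bound : ∀ t y, |g t y| ≤ m t

namespace IsCaratheodory

variable {g : ℝ → ℝ → ℝ} {m : ℝ → ℝ}

theorem measurable_uncurry (hg : IsCaratheodory g m) : Measurable (Function.uncurry g) :=
  (measurable_uncurry_of_continuous_of_measurable (u := fun y t => g t y) hg.continuous_right
    hg.measurable_left).comp measurable_swap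

theorem bound_nonneg (hg : IsCaratheodory g m) (t : ℝ) : 0 ≤ m t :=
  (abs_nonneg _).trans (hg.abs_le_bound t 0)

theorem intervalIntegrable_bound (hg : IsCaratheodory g m) (u v : ℝ) :
    IntervalIntegrable m volume u v :=
  (hg.locallyIntegrable_bound.integrableOn_isCompact isCompact_uIcc).intervalIntegrable

theorem integrableOn_comp (hg : IsCaratheodory g m) {s : Set ℝ} (hs : IsCompact s) {h : ℝ → ℝ}
    (hh : AEMeasurable h (volume.restrict s)) : IntegrableOn (fun t => g t (h t)) s :=
  Integrable.mono' (hg.locallyIntegrable_bound.integrableOn_isCompact hs)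
    (hg.measurable_uncurry.comp_aemeasurable (aemeasurable_id.prodMk hh)).aestronglyMeasurable
    (ae_of_all _ fun t => hg.abs_le_bound t (h t))

theorem intervalIntegrable_comp (hg : IsCaratheodory g m) {h : ℝ → ℝ} (hh : Continuous h)
    (u v : ℝ) : IntervalIntegrable (fun t => g t (h t)) volume u v :=
  (hg.integrableOn_comp isCompact_uIcc hh.aemeasurable).intervalIntegrable

theorem intervalIntegrable_comp_of_continuousOn (hg : IsCaratheodory g m) {h : ℝ → ℝ}
    {a b u v : ℝ} (hh : ContinuousOn h (Icc a b)) (hu : u ∈ Icc a b) (hv : v ∈ Icc a b) :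
    IntervalIntegrable (fun t => g t (h t)) volume u v :=
  ((hg.integrableOn_comp isCompact_Icc (hh.aemeasurable measurableSet_Icc)).mono_set
    (uIcc_subset_Icc hu hv)).intervalIntegrable

theorem comp_max (hg : IsCaratheodory g m) {h : ℝ → ℝ} (hh : Continuous h) :
    IsCaratheodory (fun t y => g t (max y (h t))) m where
  measurable_left _ :=
    hg.measurable_uncurry.comp (measurable_id.prodMk (measurable_const.max hh.measurable))
  continuous_right t := (hg.continuous_right t).comp (continuous_id.max continuous_const)
  locallyIntegrable_bound := hg.locallyIntegrable_bound
  abs_le_bound t _ := hg.abs_le_bound t _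

end IsCaratheodory

theorem abs_integral_sub_integral_le {F m : ℝ → ℝ} {t₀ u v : ℝ}
    (hFu : IntervalIntegrable F volume t₀ u) (hFv : IntervalIntegrable F volume t₀ v)
    (hmu : IntervalIntegrable m volume t₀ u) (hmv : IntervalIntegrable m volume t₀ v)
    (hFm : ∀ s, |F s| ≤ m s) :
    |(∫ s in t₀..u, F s) - ∫ s in t₀..v, F s| ≤ |(∫ s in t₀..u, m s) - ∫ s in t₀..v, m s| := by
  rw [integral_interval_sub_left hFu hFv, integral_interval_sub_left hmu hmv]
  exact norm_integral_le_abs_of_norm_le (f := F) (ae_of_all _ hFm) (hmv.symm.trans hmu)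

theorem continuousOn_of_dist_le {X Y Z : Type*} [TopologicalSpace X] [PseudoMetricSpace Y]
    [PseudoMetricSpace Z] {x : X → Y} {Φ : X → Z} {S : Set X} (hΦ : ContinuousOn Φ S)
    (h : ∀ u ∈ S, ∀ v ∈ S, dist (x u) (x v) ≤ dist (Φ u) (Φ v)) : ContinuousOn x S := by
  intro u hu
  rw [ContinuousWithinAt, tendsto_iff_dist_tendsto_zero]
  refine squeeze_zero' (Eventually.of_forall fun _ => dist_nonneg)
    (eventually_nhdsWithin_of_forall fun v hv => h v hv u hu) ?_
  exact tendsto_iff_dist_tendsto_zero.1 (hΦ u hu)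

theorem aemeasurable_restrict_of_continuousOn_of_eqOn_diff {α β : Type*} [TopologicalSpace α]
    [MeasurableSpace α] [OpensMeasurableSpace α] [TopologicalSpace β] [MeasurableSpace β]
    [BorelSpace β] {μ : Measure α} {x : α → β} {S A : Set α} {c : β} (hS : MeasurableSet S)
    (hA : MeasurableSet A) (hc : ContinuousOn x (S ∩ A)) (hconst : ∀ t ∈ S \ A, x t = c) :
    AEMeasurable x (μ.restrict S) := by
  rw [← inter_union_sdiff S A, aemeasurable_union_iff]
  exact ⟨hc.aemeasurable (hS.inter hA), aemeasurable_const.congr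
    ((ae_restrict_iff' (hS.diff hA)).2 (ae_of_all _ fun t ht => (hconst t ht).symm))⟩

theorem IsCaratheodory.continuousOn_of_integral_eq {g : ℝ → ℝ → ℝ} {m x : ℝ → ℝ}
    {t₀ x₀ a b : ℝ} (hg : IsCaratheodory g m) (ht₀ : t₀ ∈ Icc a b)
    (hx : ∀ t ∈ Icc a b, x t = x₀ + ∫ s in t₀..t, g s (x s)) : ContinuousOn x (Icc a b) := by
  set A := {t | IntervalIntegrable (fun s => g s (x s)) volume t₀ t}
  have hA : A.OrdConnected := ⟨fun u hu v hv w hw =>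
    hu.trans ((hu.symm.trans hv).mono_set (uIcc_subset_uIcc_left (Icc_subset_uIcc hw)))⟩
  have hxA : ContinuousOn x (Icc a b ∩ A) := by
    refine continuousOn_of_dist_le
      (continuous_primitive hg.intervalIntegrable_bound t₀).continuousOn fun u hu v hv => ?_
    rw [Real.dist_eq, Real.dist_eq, hx u hu.1, hx v hv.1, add_sub_add_left_eq_sub]
    exact abs_integral_sub_integral_le hu.2 hv.2 (hg.intervalIntegrable_bound _ _)
      (hg.intervalIntegrable_bound _ _) fun s => hg.abs_le_bound s (x s)
  -- Off `A` the interval integral is `0` by convention, so `x = x₀` there.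
  have hxm : AEMeasurable x (volume.restrict (Icc a b)) :=
    aemeasurable_restrict_of_continuousOn_of_eqOn_diff measurableSet_Icc hA.measurableSet hxA
      fun t ht => by rw [hx t ht.1, integral_undef ht.2, add_zero]
  have hab : a ≤ b := ht₀.1.trans ht₀.2
  have hF : IntervalIntegrable (fun s => g s (x s)) volume a b :=
    (intervalIntegrable_iff_integrableOn_Icc_of_le hab).2 (hg.integrableOn_comp isCompact_Icc hxm)
  have hprim := continuousOn_primitive_interval' hF (by rwa [uIcc_of_le hab])
  rw [uIcc_of_le hab] at hprim
  exact (continuousOn_const.add hprim).congr hx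

/-- `t` moved by `d` towards `t₀`, stopping at `t₀`. -/
noncomputable def delay (t₀ d t : ℝ) : ℝ := max t₀ (t - d) + min t₀ (t + d) - t₀

section Delay

variable {t₀ d : ℝ}

theorem delay_self (hd : 0 ≤ d) : delay t₀ d t₀ = t₀ := by
  simp only [delay, max_def, min_def]; split_ifs <;> linarith

theorem delay_mem_uIcc (hd : 0 ≤ d) (t : ℝ) : delay t₀ d t ∈ uIcc t₀ t := by
  simp only [delay, uIcc, mem_Icc, max_def, min_def]; split_ifs <;> constructor <;> linarith

theorem abs_delay_sub_le (hd : 0 ≤ d) (t : ℝ) : |delay t₀ d t - t₀| ≤ max (|t - t₀| - d) 0 := by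
  simp only [delay, abs_eq_max_neg, max_def, min_def]; split_ifs <;> linarith

theorem abs_delay_sub_self_le (hd : 0 ≤ d) (t : ℝ) : |delay t₀ d t - t| ≤ d := by
  simp only [delay, abs_eq_max_neg, max_def, min_def]; split_ifs <;> linarith

theorem lipschitzWith_delay (hd : 0 ≤ d) : LipschitzWith 1 (delay t₀ d) :=
  LipschitzWith.of_dist_le_mul fun t u => by
    simp only [Real.dist_eq, NNReal.coe_one, one_mul, delay, abs_eq_max_neg, max_def, min_def]
    split_ifs <;> linarith

theorem continuous_delay : Continuous (delay t₀ d) := by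
  unfold delay; fun_prop

theorem tendsto_delay {d : ℕ → ℝ} (hd₀ : ∀ n, 0 ≤ d n) (hd : Tendsto d atTop (𝓝 0)) (t : ℝ) :
    Tendsto (fun n => delay t₀ (d n) t) atTop (𝓝 t) :=
  tendsto_iff_dist_tendsto_zero.2 <| squeeze_zero (fun _ => dist_nonneg)
    (fun n => (Real.dist_eq _ _).trans_le (abs_delay_sub_self_le (hd₀ n) t)) hd

end Delay

/-- Tonelli's delayed Picard operator: the values of its image on `|t - t₀| ≤ r + d` only depend
on the values of its argument on `|t - t₀| ≤ r`, so its iterates stabilise. -/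
noncomputable def delayedPicard (g : ℝ → ℝ → ℝ) (t₀ d c : ℝ) (h : ℝ → ℝ) (t : ℝ) : ℝ :=
  c + ∫ s in t₀..delay t₀ d t, g s (h s)

section DelayedPicard

variable {g : ℝ → ℝ → ℝ} {m : ℝ → ℝ} {t₀ d c : ℝ}

theorem delayedPicard_congr {h₁ h₂ : ℝ → ℝ} {r t : ℝ} (hd : 0 ≤ d) (hr : 0 ≤ r)
    (h : ∀ s, |s - t₀| ≤ r → h₁ s = h₂ s) (ht : |t - t₀| ≤ r + d) :
    delayedPicard g t₀ d c h₁ t = delayedPicard g t₀ d c h₂ t := by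
  refine congrArg (c + ·) (integral_congr fun s hs => congrArg (g s) (h s ?_))
  calc |s - t₀| ≤ |delay t₀ d t - t₀| := abs_sub_left_of_mem_uIcc hs
    _ ≤ max (|t - t₀| - d) 0 := abs_delay_sub_le hd t
    _ ≤ r := max_le (by linarith) hr

theorem delayedPicard_iterate_eq (hd : 0 ≤ d) (k : ℕ) {t : ℝ} (ht : |t - t₀| ≤ k * d) :
    (delayedPicard g t₀ d c)^[k] (fun _ => c) t =
      (delayedPicard g t₀ d c)^[k + 1] (fun _ => c) t := by
  induction k generalizing t with
  | zero =>
    obtain rfl : t = t₀ := by simpa [sub_eq_zero] using ht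
    simp [delayedPicard, delay_self hd]
  | succ k ih =>
    rw [Function.iterate_succ_apply', Function.iterate_succ_apply' _ (k + 1)]
    exact delayedPicard_congr hd (by positivity) (fun s hs => ih hs) (by push_cast at ht; linarith)

theorem IsCaratheodory.continuous_delayedPicard (hg : IsCaratheodory g m) {h : ℝ → ℝ}
    (hh : Continuous h) : Continuous (delayedPicard g t₀ d c h) :=
  continuous_const.add
    ((continuous_primitive (hg.intervalIntegrable_comp hh) t₀).comp continuous_delay)

theorem IsCaratheodory.exists_delayed_solution (hg : IsCaratheodory g m) (hd : 0 < d) (R : ℝ) : ∃ z : ℝ → ℝ, Continuous z ∧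
      ∀ t, |t - t₀| ≤ R → z t = c + ∫ s in t₀..delay t₀ d t, g s (z s) := by
  refine ⟨(delayedPicard g t₀ d c)^[⌈R / d⌉₊] fun _ => c,
    Function.Iterate.rec _ continuous_const (fun _ hh => hg.continuous_delayedPicard hh) _,
    fun t ht => ?_⟩
  have hR : R ≤ ⌈R / d⌉₊ * d := (div_le_iff₀ hd).1 (Nat.le_ceil _)
  rw [delayedPicard_iterate_eq hd.le _ (ht.trans hR), Function.iterate_succ_apply']
  rfl

end DelayedPicard

theorem uniformEquicontinuous_of_dist_le {ι X Y Z : Type*} [PseudoMetricSpace X]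
    [PseudoMetricSpace Y] [PseudoMetricSpace Z] {S : Set X} (hS : IsCompact S) {Φ : X → Z}
    (hΦ : ContinuousOn Φ S) {z : ι → X → Y} {σ : ι → X → X} (hσS : ∀ i, MapsTo (σ i) S S)
    (hσ : ∀ i, LipschitzWith 1 (σ i))
    (hz : ∀ i, ∀ u ∈ S, ∀ v ∈ S, dist (z i u) (z i v) ≤ dist (Φ (σ i u)) (Φ (σ i v))) :
    UniformEquicontinuous fun i (p : S) => z i p := by
  rw [Metric.uniformEquicontinuous_iff]
  intro ε hε
  obtain ⟨δ, hδ, hΦδ⟩ :=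
    Metric.uniformContinuousOn_iff.1 (hS.uniformContinuousOn_of_continuous hΦ) ε hε
  refine ⟨δ, hδ, fun p q hpq i => (hz i p p.2 q q.2).trans_lt (hΦδ _ (hσS i p.2) _ (hσS i q.2) ?_)⟩
  calc dist (σ i p) (σ i q) ≤ dist (p : X) q := by simpa using (hσ i).dist_le_mul p q
    _ < δ := hpq

theorem exists_subseq_tendsto_of_equicontinuous {α : Type*} [MetricSpace α] {a b : ℝ}
    (hab : a ≤ b) {z : ℕ → ℝ → α} {K : Set α} (hK : IsCompact K)
    (hzK : ∀ n, ∀ t ∈ Icc a b, z n t ∈ K) (hz : Equicontinuous fun n (p : Icc a b) => z n p) :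
    ∃ Z : ℝ → α, Continuous Z ∧ ∃ φ : ℕ → ℕ, StrictMono φ ∧
      ∀ t ∈ Icc a b, Tendsto (fun n => z (φ n) t) atTop (𝓝 (Z t)) := by
  have : CompactSpace (Icc a b) := isCompact_iff_compactSpace.mp isCompact_Icc
  let zb n : BoundedContinuousFunction (Icc a b) α := .mkOfCompact ⟨_, hz.continuous n⟩
  have hequi : Equicontinuous fun f : range zb => ⇑(f : BoundedContinuousFunction (Icc a b) α) := by
    convert hz.comp (rangeSplitting zb) with f
    exact congrArg DFunLike.coe (apply_rangeSplitting zb f).symm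
  obtain ⟨w, -, φ, hφ, hlim⟩ := (BoundedContinuousFunction.arzela_ascoli K hK _
    (by rintro _ p ⟨n, rfl⟩; exact hzK n p p.2) hequi).tendsto_subseq
    fun n => subset_closure (mem_range_self n)
  refine ⟨IccExtend hab w, w.continuous.Icc_extend', φ, hφ, fun t ht => ?_⟩
  rw [IccExtend_of_mem hab w ht]
  exact ((BoundedContinuousFunction.lipschitz_eval_const ⟨t, ht⟩).continuous.tendsto w).comp hlim

section Existence

variable {g : ℝ → ℝ → ℝ} {m : ℝ → ℝ} {t₀ a b : ℝ}

theorem IsCaratheodory.integral_eq_of_tendsto_delayed (hg : IsCaratheodory g m)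
    (ht₀ : t₀ ∈ Icc a b) {d : ℕ → ℝ} (hd₀ : ∀ n, 0 ≤ d n) (hd : Tendsto d atTop (𝓝 0))
    {c : ℝ} {z : ℕ → ℝ → ℝ} (hzc : ∀ n, Continuous (z n))
    (hz : ∀ n, ∀ t ∈ Icc a b, z n t = c + ∫ s in t₀..delay t₀ (d n) t, g s (z n s))
    {Z : ℝ → ℝ} (hlim : ∀ t ∈ Icc a b, Tendsto (fun n => z n t) atTop (𝓝 (Z t)))
    {t : ℝ} (ht : t ∈ Icc a b) : Z t = c + ∫ s in t₀..t, g s (Z s) := by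
  have hmain : Tendsto (fun n => ∫ s in t₀..t, g s (z n s)) atTop
      (𝓝 (∫ s in t₀..t, g s (Z s))) :=
    tendsto_integral_filter_of_dominated_convergence m
      (Eventually.of_forall fun n => (hg.intervalIntegrable_comp (hzc n) t₀ t).def'.1)
      (Eventually.of_forall fun n => ae_of_all _ fun s _ => hg.abs_le_bound s (z n s))
      (hg.intervalIntegrable_bound t₀ t)
      (ae_of_all _ fun s hs => ((hg.continuous_right s).tendsto (Z s)).comp
        (hlim s (uIcc_subset_Icc ht₀ ht (uIoc_subset_uIcc hs))))
  have htail : Tendsto (fun n => ∫ s in delay t₀ (d n) t..t, g s (z n s)) atTop (𝓝 0) := by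
    have hm : Tendsto (fun n => |∫ s in t..delay t₀ (d n) t, m s|) atTop (𝓝 0) := by
      simpa using (((continuous_primitive hg.intervalIntegrable_bound t).tendsto t).comp
        (tendsto_delay hd₀ hd t)).abs
    refine squeeze_zero_norm (fun n => ?_) hm
    rw [integral_symm t, norm_neg]
    exact norm_integral_le_abs_of_norm_le (ae_of_all _ fun s => hg.abs_le_bound s (z n s))
      (hg.intervalIntegrable_bound _ _)
  have hsplit : ∀ n, z n t = c + ((∫ s in t₀..t, g s (z n s)) -
      ∫ s in delay t₀ (d n) t..t, g s (z n s)) := fun n => by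
    rw [hz n t ht, ← integral_add_adjacent_intervals (hg.intervalIntegrable_comp (hzc n) t₀
      (delay t₀ (d n) t)) (hg.intervalIntegrable_comp (hzc n) _ t), add_sub_cancel_right]
  refine tendsto_nhds_unique (hlim t ht) ?_
  simpa using (tendsto_const_nhds.add (hmain.sub htail)).congr fun n => (hsplit n).symm

theorem IsCaratheodory.exists_solution (hg : IsCaratheodory g m) (ht₀ : t₀ ∈ Icc a b) (c : ℝ) :
    ∃ z : ℝ → ℝ, Continuous z ∧ ∀ t ∈ Icc a b, z t = c + ∫ s in t₀..t, g s (z s) := by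
  have hab : a ≤ b := ht₀.1.trans ht₀.2
  set d : ℕ → ℝ := fun n => 1 / (n + 1)
  have hd : ∀ n, 0 < d n := fun n => by positivity
  choose z hzc hz using fun n => hg.exists_delayed_solution (t₀ := t₀) (c := c) (hd n) (b - a)
  replace hz : ∀ n, ∀ t ∈ Icc a b, z n t = c + ∫ s in t₀..delay t₀ (d n) t, g s (z n s) :=
    fun n t ht => hz n t ((Real.dist_eq t t₀).symm.trans_le (Real.dist_le_of_mem_Icc ht ht₀))
  set Φ : ℝ → ℝ := fun u => ∫ s in t₀..u, m s
  have hmaps : ∀ n, MapsTo (delay t₀ (d n)) (Icc a b) (Icc a b) := fun n t ht =>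
    uIcc_subset_Icc ht₀ ht (delay_mem_uIcc (hd n).le t)
  have hosc : ∀ n, ∀ u ∈ Icc a b, ∀ v ∈ Icc a b,
      dist (z n u) (z n v) ≤ dist (Φ (delay t₀ (d n) u)) (Φ (delay t₀ (d n) v)) :=
    fun n u hu v hv => by
      rw [Real.dist_eq, Real.dist_eq, hz n u hu, hz n v hv, add_sub_add_left_eq_sub]
      exact abs_integral_sub_integral_le (hg.intervalIntegrable_comp (hzc n) _ _)
        (hg.intervalIntegrable_comp (hzc n) _ _) (hg.intervalIntegrable_bound _ _)
        (hg.intervalIntegrable_bound _ _) fun s => hg.abs_le_bound s _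
  have hbound : ∀ n, ∀ t ∈ Icc a b, z n t ∈ Metric.closedBall c |∫ s in a..b, m s| := by
    intro n t ht
    have hzt₀ : z n t₀ = c := by simp [hz n t₀ ht₀, delay_self (hd n).le]
    refine (hzt₀ ▸ hosc n t ht t₀ ht₀).trans ?_
    simp only [Φ, delay_self (hd n).le, integral_same, Real.dist_eq, sub_zero]
    refine abs_integral_mono_interval (uIoc_subset_uIoc_of_uIcc_subset_uIcc ?_)
      (ae_of_all _ hg.bound_nonneg) (hg.intervalIntegrable_bound a b)
    rw [uIcc_of_le hab]; exact uIcc_subset_Icc ht₀ (hmaps n ht)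
  have hequi := uniformEquicontinuous_of_dist_le isCompact_Icc
    (continuous_primitive hg.intervalIntegrable_bound t₀).continuousOn hmaps
    (fun n => lipschitzWith_delay (hd n).le) hosc
  obtain ⟨Z, hZc, φ, hφ, hlim⟩ :=
    exists_subseq_tendsto_of_equicontinuous hab (isCompact_closedBall _ _) hbound
      hequi.equicontinuous
  exact ⟨Z, hZc, fun t ht => hg.integral_eq_of_tendsto_delayed ht₀ (fun n => (hd (φ n)).le)
    (tendsto_one_div_add_atTop_nhds_zero_nat.comp hφ.tendsto_atTop) (fun n => hzc (φ n))
    (fun n => hz (φ n)) hlim ht⟩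

end Existence

theorem nonneg_of_forall_le_of_neg {u : ℝ → ℝ} {t₀ t : ℝ} (hu : ContinuousOn u (uIcc t₀ t))
    (h₀ : 0 ≤ u t₀) (hstep : ∀ τ ∈ uIcc t₀ t, (∀ s ∈ uIoo τ t, u s < 0) → u τ ≤ u t) :
    0 ≤ u t := by
  by_contra! ht
  have hS : IsCompact (uIcc t₀ t ∩ u ⁻¹' Ici 0) :=
    isCompact_uIcc.of_isClosed_subset
      (hu.preimage_isClosed_of_isClosed isCompact_uIcc.isClosed isClosed_Ici) inter_subset_left
  -- `τ` is the point of `{u ≥ 0}` closest to `t`.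
  obtain ⟨τ, ⟨hτ, hτ₀⟩, hmin⟩ := hS.exists_isMinOn ⟨t₀, left_mem_uIcc, h₀⟩
    (continuous_id.sub continuous_const).abs.continuousOn (f := fun s => |s - t|)
  refine absurd (hstep τ hτ fun s hs => not_le.1 fun hs₀ => ?_) (not_le.2 (ht.trans_le hτ₀))
  have hcloser : |s - t| < |τ - t| := by
    simp only [uIoo, mem_Ioo, min_def, max_def] at hs
    simp only [abs_eq_max_neg, max_def]; split_ifs at hs ⊢ <;> linarith
  exact not_le.2 hcloser (hmin ⟨uIcc_subset_uIcc hτ right_mem_uIcc (Ioo_subset_Icc_self hs), hs₀⟩)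

theorem integral_le_integral_of_mul_le {F G : ℝ → ℝ} {t₀ τ t : ℝ} (hτ : τ ∈ uIcc t₀ t)
    (hF : IntervalIntegrable F volume τ t) (hG : IntervalIntegrable G volume τ t)
    (h : ∀ᵐ s, (s - t₀) * F s ≤ (s - t₀) * G s) : ∫ s in τ..t, F s ≤ ∫ s in τ..t, G s := by
  rcases mem_uIcc.1 hτ with ⟨ht₀τ, hτt⟩ | ⟨htτ, hτt₀⟩
  · refine integral_mono_ae_restrict hτt hF hG ?_
    filter_upwards [ae_restrict_mem measurableSet_Icc, ae_restrict_of_ae h,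
      ae_restrict_of_ae (Measure.ae_ne volume t₀)] with s hs hFG hst₀
    exact le_of_mul_le_mul_left hFG (sub_pos.2 (lt_of_le_of_ne (ht₀τ.trans hs.1) hst₀.symm))
  · rw [integral_symm t, integral_symm t τ, neg_le_neg_iff]
    refine integral_mono_ae_restrict htτ hG.symm hF.symm ?_
    filter_upwards [ae_restrict_mem measurableSet_Icc, ae_restrict_of_ae h,
      ae_restrict_of_ae (Measure.ae_ne volume t₀)] with s hs hFG hst₀
    exact (mul_le_mul_left_of_neg (sub_neg.2 (lt_of_le_of_ne (hs.2.trans hτt₀) hst₀))).1 hFG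

theorem ae_forall_le_of_ae_prod {α β : Type*} [MeasurableSpace α] [MeasurableSpace β]
    [TopologicalSpace β] {μ : Measure α} {ν : Measure β} [SFinite ν] [ν.IsOpenPosMeasure]
    {F G : α → β → ℝ} (hF : ∀ t, Continuous (F t)) (hG : ∀ t, Continuous (G t))
    (h : ∀ᵐ p ∂μ.prod ν, F p.1 p.2 ≤ G p.1 p.2) : ∀ᵐ t ∂μ, ∀ y, F t y ≤ G t y := by
  filter_upwards [Measure.ae_ae_of_ae_prod h] with t ht
  have hdense := (Measure.dense_of_ae ht).closure_eq
  rw [(isClosed_le (hF t) (hG t)).closure_eq] at hdense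
  exact eq_univ_iff_forall.1 hdense

theorem sub_eq_integral_of_eq_add_integral {y F : ℝ → ℝ} {S : Set ℝ} {t₀ y₀ : ℝ}
    (hy : ∀ t ∈ S, y t = y₀ + ∫ s in t₀..t, F s)
    (hF : ∀ u ∈ S, ∀ v ∈ S, IntervalIntegrable F volume u v) (ht₀ : t₀ ∈ S) {u v : ℝ}
    (hu : u ∈ S) (hv : v ∈ S) : y v - y u = ∫ s in u..v, F s := by
  rw [hy v hv, hy u hu, add_sub_add_left_eq_sub,
    integral_interval_sub_left (hF _ ht₀ _ hv) (hF _ ht₀ _ hu)]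

theorem le_of_integral_eq_max {f f' : ℝ → ℝ → ℝ} {m x z : ℝ → ℝ} {t₀ x₀ z₀ a b : ℝ}
    (hf : IsCaratheodory f m) (hf' : IsCaratheodory f' m) (ht₀ : t₀ ∈ Icc a b) (hx₀ : x₀ ≤ z₀)
    (hxc : ContinuousOn x (Icc a b)) (hzc : ContinuousOn z (Icc a b))
    (hx : ∀ t ∈ Icc a b, x t = x₀ + ∫ s in t₀..t, f s (x s))
    (hz : ∀ t ∈ Icc a b, z t = z₀ + ∫ s in t₀..t, f' s (max (z s) (x s)))
    (hff' : ∀ᵐ s, ∀ y, (s - t₀) * f s y ≤ (s - t₀) * f' s y) {t : ℝ} (ht : t ∈ Icc a b) :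
    x t ≤ z t := by
  have hix : ∀ u ∈ Icc a b, ∀ v ∈ Icc a b, IntervalIntegrable (fun s => f s (x s)) volume u v :=
    fun _ hu _ hv => hf.intervalIntegrable_comp_of_continuousOn hxc hu hv
  have hiz : ∀ u ∈ Icc a b, ∀ v ∈ Icc a b,
      IntervalIntegrable (fun s => f' s (max (z s) (x s))) volume u v :=
    fun _ hu _ hv => hf'.intervalIntegrable_comp_of_continuousOn (hzc.sup hxc) hu hv
  have hsub : uIcc t₀ t ⊆ Icc a b := uIcc_subset_Icc ht₀ ht
  rw [← sub_nonneg]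
  refine nonneg_of_forall_le_of_neg (u := fun s => z s - x s) ((hzc.sub hxc).mono hsub)
    (by simp [hx t₀ ht₀, hz t₀ ht₀, hx₀]) fun τ hτ hneg => ?_
  have hτ' := hsub hτ
  have hzτ : z t - z τ = ∫ s in τ..t, f' s (x s) := by
    rw [sub_eq_integral_of_eq_add_integral hz hiz ht₀ hτ' ht]
    refine integral_congr_ae ((Measure.ae_ne volume (max τ t)).mono fun s hs hmem => ?_)
    rw [max_eq_right (sub_neg.1 (hneg s ⟨hmem.1, lt_of_le_of_ne hmem.2 hs⟩)).le]
  have hxτ := sub_eq_integral_of_eq_add_integral hx hix ht₀ hτ' ht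
  have hcmp := integral_le_integral_of_mul_le hτ (hix τ hτ' t ht)
    (hf'.intervalIntegrable_comp_of_continuousOn hxc hτ' ht) (hff'.mono fun s hs => hs (x s))
  linarith

end Caratheodory

open Caratheodory

theorem stmt_11_general (f ftilde : ℝ → ℝ → ℝ) (m : ℝ → ℝ)
    (hmeas : ∀ x : ℝ, Measurable (fun t => f t x))
    (hmeas' : ∀ x : ℝ, Measurable (fun t => ftilde t x))
    (hcont : ∀ t : ℝ, Continuous (f t))
    (hcont' : ∀ t : ℝ, Continuous (ftilde t))
    (hm : LocallyIntegrable m volume)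
    (hdom : ∀ t x : ℝ, |f t x| ≤ m t)
    (hdom' : ∀ t x : ℝ, |ftilde t x| ≤ m t)
    (t₀ x₀ xt₀ : ℝ) (hx₀ : x₀ ≤ xt₀)
    (a b : ℝ) (ht₀ : t₀ ∈ Icc a b)
    (x xtilde : ℝ → ℝ)
    -- x is a Carathéodory solution of x' = f(t,x), x(t₀) = x₀ on [a,b]
    (hx : ∀ t ∈ Icc a b, x t = x₀ + ∫ s in t₀..t, f s (x s))
    -- x̃ is the maximal such solution
    (hmax : ∀ z : ℝ → ℝ, (∀ t ∈ Icc a b, z t = xt₀ + ∫ s in t₀..t, ftilde s (z s)) →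
      ∀ t ∈ Icc a b, z t ≤ xtilde t)
    -- (t − t₀) f(t,x) ≤ (t − t₀) f̃(t,x) a.e. in ℝ²
    (hineq : ∀ᵐ p : ℝ × ℝ, (p.1 - t₀) * f p.1 p.2 ≤ (p.1 - t₀) * ftilde p.1 p.2) :
    ∀ t ∈ Icc a b, x t ≤ xtilde t := by
  have hf : IsCaratheodory f m := ⟨hmeas, hcont, hm, hdom⟩
  have hf' : IsCaratheodory ftilde m := ⟨hmeas', hcont', hm, hdom'⟩
  have hab : a ≤ b := ht₀.1.trans ht₀.2
  have hxc := hf.continuousOn_of_integral_eq ht₀ hx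
  have hext : ∀ t ∈ Icc a b, IccExtend hab ((Icc a b).domRestrict x) t = x t :=
    fun t ht => IccExtend_of_mem hab _ ht
  obtain ⟨Z, hZc, hZ⟩ :=
    (hf'.comp_max (hxc.domRestrict.Icc_extend' (h := hab))).exists_solution ht₀ xt₀
  replace hZ : ∀ t ∈ Icc a b, Z t = xt₀ + ∫ s in t₀..t, ftilde s (max (Z s) (x s)) :=
    fun t ht => (hZ t ht).trans <| congrArg (xt₀ + ·) <| integral_congr fun s hs => by
      rw [hext s (uIcc_subset_Icc ht₀ ht hs)]
  rw [Measure.volume_eq_prod] at hineq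
  have hxZ : ∀ t ∈ Icc a b, x t ≤ Z t := fun t ht =>
    le_of_integral_eq_max hf hf' ht₀ hx₀ hxc hZc.continuousOn hx hZ
      (ae_forall_le_of_ae_prod (fun t => continuous_const.mul (hcont t))
        (fun t => continuous_const.mul (hcont' t)) hineq) ht
  refine fun t ht => (hxZ t ht).trans (hmax Z (fun t ht => (hZ t ht).trans ?_) t ht)
  exact congrArg (xt₀ + ·) <| integral_congr fun s hs => by
    rw [max_eq_left (hxZ s (uIcc_subset_Icc ht₀ ht hs))]

/-- Comparison lemma for Carathéodory ODEs: f, f̃ satisfy the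
Carathéodory conditions (measurable in t, continuous in x, dominated by a locally
integrable m). If x is a Carathéodory solution of `x' = f(t,x)`, `x t₀ = x₀`, x̃ is
the maximal Carathéodory solution of `x̃' = f̃(t,x̃)`, `x̃ t₀ = x̃₀`, with `x₀ ≤ x̃₀`,
and `(t − t₀) f(t,x) ≤ (t − t₀) f̃(t,x)` a.e. in ℝ², then `x t ≤ x̃ t` on the common
interval of existence. -/
theorem stmt_11 (f ftilde : ℝ → ℝ → ℝ) (m : ℝ → ℝ)
    (hmeas : ∀ x : ℝ, Measurable (fun t => f t x))
    (hmeas' : ∀ x : ℝ, Measurable (fun t => ftilde t x))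
    (hcont : ∀ t : ℝ, Continuous (f t))
    (hcont' : ∀ t : ℝ, Continuous (ftilde t))
    (hm : LocallyIntegrable m volume)
    (hdom : ∀ t x : ℝ, |f t x| ≤ m t)
    (hdom' : ∀ t x : ℝ, |ftilde t x| ≤ m t)
    (t₀ x₀ xt₀ : ℝ) (hx₀ : x₀ ≤ xt₀)
    (a b : ℝ) (ht₀ : t₀ ∈ Icc a b)
    (x xtilde : ℝ → ℝ)
    -- x is a Carathéodory solution of x' = f(t,x), x(t₀) = x₀ on [a,b]
    (hx : ∀ t ∈ Icc a b, x t = x₀ + ∫ s in t₀..t, f s (x s))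
    -- x̃ is a Carathéodory solution of x̃' = f̃(t,x̃), x̃(t₀) = x̃₀ on [a,b]
    (hxt : ∀ t ∈ Icc a b, xtilde t = xt₀ + ∫ s in t₀..t, ftilde s (xtilde s))
    -- x̃ is the maximal such solution
    (hmax : ∀ z : ℝ → ℝ, (∀ t ∈ Icc a b, z t = xt₀ + ∫ s in t₀..t, ftilde s (z s)) →
      ∀ t ∈ Icc a b, z t ≤ xtilde t)
    -- (t − t₀) f(t,x) ≤ (t − t₀) f̃(t,x) a.e. in ℝ²
    (hineq : ∀ᵐ p : ℝ × ℝ, (p.1 - t₀) * f p.1 p.2 ≤ (p.1 - t₀) * ftilde p.1 p.2) :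
    ∀ t ∈ Icc a b, x t ≤ xtilde t :=
  stmt_11_general f ftilde m hmeas hmeas' hcont hcont' hm hdom hdom' t₀ x₀ xt₀ hx₀ a b ht₀ x xtilde
    hx hmax hineq
end
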